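/- With notation as in the unconstrained shrinkage problem, the minimal value of $F$ at the optimal weights equals $\frac{V_i^2}{1 + \sum_{k\ne i} V_k^2/\sigma_k^2}$. -/

import Mathlib

open Finset

/-- The minimal value of the unconstrained shrinkage objective `F` at the optimal
weights equals `V i ^ 2 / (1 + ∑_{k≠i} V k ^ 2 / σsq k)`. -/
theorem vop_min_value {B : ℕ} (V σsq : Fin B → ℝ)
    (hσ : ∀ k, 0 < σsq k) (i : Fin B)
    (F : (Fin B → ℝ) → ℝ)
    (hF : ∀ w, F w = (V i - ∑ j ∈ univ.erase i, w j * V j) ^ 2 +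
      ∑ j ∈ univ.erase i, (w j) ^ 2 * σsq j)
    (wopt : Fin B → ℝ)
    (hwopt : ∀ j, wopt j =
      (V i * V j / σsq j) / (1 + ∑ k ∈ univ.erase i, V k ^ 2 / σsq k)) :
    F wopt = V i ^ 2 / (1 + ∑ k ∈ univ.erase i, V k ^ 2 / σsq k) := by
  rw [hF]
  set S := ∑ k ∈ univ.erase i, V k ^ 2 / σsq k with hS
  have hSpos : 0 ≤ S := Finset.sum_nonneg (fun k _ => div_nonneg (sq_nonneg _) (hσ k).le)
  clear_value S
  have hD : (0:ℝ) < 1 + S := by linarith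
  have hDne : (1 + S) ≠ 0 := hD.ne'
  have h1 : ∑ j ∈ univ.erase i, wopt j * V j = V i / (1 + S) * S := by
    have e : ∀ j ∈ univ.erase i, wopt j * V j = V i / (1 + S) * (V j ^ 2 / σsq j) := by
      intro j hj
      rw [hwopt j]
      have h := (hσ j).ne'
      field_simp
    rw [Finset.sum_congr rfl e, ← Finset.mul_sum, ← hS]
  have h2 : ∑ j ∈ univ.erase i, (wopt j) ^ 2 * σsq j = (V i / (1 + S)) ^ 2 * S := by
    have e : ∀ j ∈ univ.erase i, (wopt j) ^ 2 * σsq j = (V i / (1 + S)) ^ 2 * (V j ^ 2 / σsq j) := by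
      intro j hj
      rw [hwopt j]
      have h := (hσ j).ne'
      field_simp
    rw [Finset.sum_congr rfl e, ← Finset.mul_sum, ← hS]
  rw [h1, h2]
  field_simp
  ring
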